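/- (Example 4.2) In ℝ⁴ with x = (x₁, x₂, x₃, x₄), let φ(x) = (1/4)x₁ − x₁x₂ + x₃ + x₃² + (1/12)x₄⁴, and let Γ := {x ∈ ℝ⁴ : x₁ − x₃ ≤ 0, −x₁ − x₃ ≤ 0, x₂ − 2x₃ ≤ 0, −x₂ − 2x₃ ≤ 0, −x₁ + x₂² ≤ 0, −x₁ ≤ 0, −x₁ + x₂² + x₂ = 0}. Then x̄ := (0,0,0,0) is a stationary point of the NLP: minimize φ(x) subject to x ∈ Γ, but x̄ is NOT a tilt-stable local minimizer of this NLP. -/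

import Mathlib

open Filter Topology Metric Set
open scoped RealInnerProductSpace

noncomputable section

/-- The Bouligand (contingent) tangent cone to `s` at `x`. -/
def BCone {V : Type*} [NormedAddCommGroup V] [NormedSpace ℝ V] (s : Set V) (x : V) : Set V :=
  {u | ∃ (t : ℕ → ℝ) (c : ℕ → V), (∀ k, 0 < t k) ∧ Filter.Tendsto t Filter.atTop (𝓝 0) ∧
    Filter.Tendsto c Filter.atTop (𝓝 u) ∧ ∀ k, x + t k • c k ∈ s}

/-- The (convex) normal cone to `K` at `w`; empty when `w ∉ K`. -/
def NCone {V : Type*} [NormedAddCommGroup V] [InnerProductSpace ℝ V] (K : Set V) (w : V) :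
    Set V :=
  {z | w ∈ K ∧ ∀ y ∈ K, ⟪z, y - w⟫ ≤ 0}

variable {n : ℕ} {ι : Type*} [Fintype ι] [DecidableEq ι]

/-- The feasible set `Γ` of the nonlinear program. -/
def Feas (E I : Finset ι) (q : ι → EuclideanSpace ℝ (Fin n) → ℝ) :
    Set (EuclideanSpace ℝ (Fin n)) :=
  {x | (∀ i ∈ E, q i x = 0) ∧ ∀ i ∈ I, q i x ≤ 0}

/-- The set of active inequality constraints at `x`. -/
def ActiveI (I : Finset ι) (q : ι → EuclideanSpace ℝ (Fin n) → ℝ)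
    (x : EuclideanSpace ℝ (Fin n)) : Finset ι :=
  I.filter fun i => q i x = 0

/-- The Lagrange multiplier set `Λ(x, x*)`. -/
def Mult (I : Finset ι) (q : ι → EuclideanSpace ℝ (Fin n) → ℝ)
    (x xs : EuclideanSpace ℝ (Fin n)) : Set (EuclideanSpace ℝ ι) :=
  {lam | ∑ i, lam i • gradient (q i) x = xs ∧ ∀ i ∈ I, 0 ≤ lam i ∧ lam i * q i x = 0}

/-- `I⁺(λ)`: the inequality indices with positive multiplier. -/
def IplusF (I : Finset ι) (lam : EuclideanSpace ℝ ι) : Finset ι :=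
  I.filter fun i => 0 < lam i

/-- `I⁺(x, x*) = ∪_{λ ∈ Λ(x,x*)} I⁺(λ)`. -/
def IplusSet (I : Finset ι) (q : ι → EuclideanSpace ℝ (Fin n) → ℝ)
    (x xs : EuclideanSpace ℝ (Fin n)) : Set ι :=
  {i | ∃ lam ∈ Mult I q x xs, i ∈ IplusF I lam}

/-- Rank of the family of gradients `{∇q_i(x) : i ∈ s}`. -/
def RankAt (q : ι → EuclideanSpace ℝ (Fin n) → ℝ) (s : Finset ι)
    (x : EuclideanSpace ℝ (Fin n)) : ℕ :=
  Module.finrank ℝ (Submodule.span ℝ ((fun i => gradient (q i) x) '' ↑s))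

/-- The relaxed constant rank constraint qualification at `xbar`. -/
def RCRCQat (E I : Finset ι) (q : ι → EuclideanSpace ℝ (Fin n) → ℝ)
    (xbar : EuclideanSpace ℝ (Fin n)) : Prop :=
  ∃ U ∈ 𝓝 xbar, ∀ J ⊆ ActiveI I q xbar, ∀ x ∈ U, ∀ y ∈ U,
    RankAt q (E ∪ J) x = RankAt q (E ∪ J) y

/-- The set `Θ = {0}^E × ℝ₋^I`. -/
def Theta (E I : Finset ι) : Set (EuclideanSpace ℝ ι) :=
  {y | (∀ i ∈ E, y i = 0) ∧ ∀ i ∈ I, y i ≤ 0}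

/-- The metric subregularity constraint qualification at `x` with modulus `κ`. -/
def MSCQat (E I : Finset ι) (q : ι → EuclideanSpace ℝ (Fin n) → ℝ)
    (x : EuclideanSpace ℝ (Fin n)) (κ : ℝ) : Prop :=
  ∃ U ∈ 𝓝 x, ∀ u ∈ U,
    Metric.infDist u (Feas E I q) ≤
      κ * Metric.infDist (show EuclideanSpace ℝ ι from WithLp.toLp 2 fun i => q i u) (Theta E I)

/-- The critical cone `K(x, x*) = T_Γ(x) ∩ {x*}^⊥`. -/
def Crit (E I : Finset ι) (q : ι → EuclideanSpace ℝ (Fin n) → ℝ)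
    (x xs : EuclideanSpace ℝ (Fin n)) : Set (EuclideanSpace ℝ (Fin n)) :=
  BCone (Feas E I q) x ∩ {v | ⟪xs, v⟫ = 0}

/-- Hessian of `f` at `x` applied to `w` (derivative of the gradient map). -/
def HessApp (f : EuclideanSpace ℝ (Fin n) → ℝ) (x w : EuclideanSpace ℝ (Fin n)) :
    EuclideanSpace ℝ (Fin n) :=
  fderiv ℝ (fun y => gradient f y) x w

/-- `∇²⟨λ, q⟩(x) w = Σ_i λ_i ∇²q_i(x) w`. -/
def HessComb (q : ι → EuclideanSpace ℝ (Fin n) → ℝ) (lam : EuclideanSpace ℝ ι)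
    (x w : EuclideanSpace ℝ (Fin n)) : EuclideanSpace ℝ (Fin n) :=
  ∑ i, lam i • HessApp (q i) x w

/-- The quadratic form `⟨v, ∇²⟨λ,q⟩(x) v⟩`. -/
def QuadComb (q : ι → EuclideanSpace ℝ (Fin n) → ℝ) (lam : EuclideanSpace ℝ ι)
    (x v : EuclideanSpace ℝ (Fin n)) : ℝ :=
  ⟪v, HessComb q lam x v⟫

/-- `Λ(x, x*; v)`: the argmax of the quadratic form over `Λ(x, x*)`. -/
def MultArgmax (I : Finset ι) (q : ι → EuclideanSpace ℝ (Fin n) → ℝ)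
    (x xs v : EuclideanSpace ℝ (Fin n)) : Set (EuclideanSpace ℝ ι) :=
  {lam ∈ Mult I q x xs | ∀ mu ∈ Mult I q x xs, QuadComb q mu x v ≤ QuadComb q lam x v}

/-- The set `G = {(u, u*) : u ∈ Γ, Λ(u, u*) ≠ ∅}`. -/
def GSet (E I : Finset ι) (q : ι → EuclideanSpace ℝ (Fin n) → ℝ) :
    Set (EuclideanSpace ℝ (Fin n) × EuclideanSpace ℝ (Fin n)) :=
  {p | p.1 ∈ Feas E I q ∧ (Mult I q p.1 p.2).Nonempty}

/-- Argmin set of the tilted problem `M_γ(v)`. -/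
def MArgmin (φ : EuclideanSpace ℝ (Fin n) → ℝ) (Γ : Set (EuclideanSpace ℝ (Fin n)))
    (xbar : EuclideanSpace ℝ (Fin n)) (γ : ℝ) (v : EuclideanSpace ℝ (Fin n)) :
    Set (EuclideanSpace ℝ (Fin n)) :=
  {x ∈ Γ ∩ Metric.closedBall xbar γ |
    ∀ y ∈ Γ ∩ Metric.closedBall xbar γ, φ x - ⟪v, x⟫ ≤ φ y - ⟪v, y⟫}

/-- Tilt-stable local minimizer with modulus `κ`. -/
def TiltStableWith (φ : EuclideanSpace ℝ (Fin n) → ℝ) (Γ : Set (EuclideanSpace ℝ (Fin n)))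
    (xbar : EuclideanSpace ℝ (Fin n)) (κ : ℝ) : Prop :=
  ∃ γ > (0:ℝ), ∃ W ∈ 𝓝 (0 : EuclideanSpace ℝ (Fin n)),
    ∃ m : EuclideanSpace ℝ (Fin n) → EuclideanSpace ℝ (Fin n),
      m 0 = xbar ∧ (∀ v ∈ W, MArgmin φ Γ xbar γ v = {m v}) ∧
      ∀ v₁ ∈ W, ∀ v₂ ∈ W, ‖m v₁ - m v₂‖ ≤ κ * ‖v₁ - v₂‖

/-- Tilt-stable local minimizer. -/
def TiltStable (φ : EuclideanSpace ℝ (Fin n) → ℝ) (Γ : Set (EuclideanSpace ℝ (Fin n)))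
    (xbar : EuclideanSpace ℝ (Fin n)) : Prop :=
  ∃ κ > (0:ℝ), TiltStableWith φ Γ xbar κ

/-- The exact bound of tilt stability. -/
def TiltBound (φ : EuclideanSpace ℝ (Fin n) → ℝ) (Γ : Set (EuclideanSpace ℝ (Fin n)))
    (xbar : EuclideanSpace ℝ (Fin n)) : ℝ :=
  sInf {κ : ℝ | 0 < κ ∧ TiltStableWith φ Γ xbar κ}


/-- The constraint functions of Example 4.2: `q₁,…,q₆` are inequality constraints (indices
`0,…,5`) and `q₇` (index `6`) is the equality constraint. -/
def qEx : Fin 7 → EuclideanSpace ℝ (Fin 4) → ℝ :=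
  ![fun x => x 0 - x 2,
    fun x => -x 0 - x 2,
    fun x => x 1 - 2 * x 2,
    fun x => -x 1 - 2 * x 2,
    fun x => -x 0 + x 1 ^ 2,
    fun x => -x 0,
    fun x => -x 0 + x 1 ^ 2 + x 1]

/-- The objective of Example 4.2. -/
def φEx2 : EuclideanSpace ℝ (Fin 4) → ℝ :=
  fun x => (1 / 4) * x 0 - x 0 * x 1 + x 2 + x 2 ^ 2 + (1 / 12) * x 3 ^ 4

end

/-!
The coordinate `x₄` does not enter the constraints, so `Γ` is invariant under translation along
`e₄`, and along such a line `φ` changes only through the term `x₄⁴ / 12`. Tilting by `t e₄` thus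
pushes the `x₄`-coordinate of the minimizer to `(3t)^(1/3)`, which is not `O(t)`: the quartic has
no curvature at `0` to make the minimizer Lipschitz in the tilt.
-/

theorem quartic_tilt_eq_of_le {a r s : ℝ} (ha : 0 < a) (hr : r ≠ 0)
    (h : a * s ^ 4 - 4 * a * r ^ 3 * s ≤ a * r ^ 4 - 4 * a * r ^ 3 * r) : s = r := by
  have hpos : 0 < (s + r) ^ 2 + 2 * r ^ 2 := by positivity
  have hfac : a * ((s - r) ^ 2 * ((s + r) ^ 2 + 2 * r ^ 2)) ≤ 0 := by linarith
  have : (s - r) ^ 2 = 0 := by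
    nlinarith [mul_nonneg (sq_nonneg (s - r)) hpos.le, nonpos_of_mul_nonpos_right hfac ha]
  linarith [pow_eq_zero_iff (n := 2) two_ne_zero |>.1 this]

theorem add_smul_mem_Feas {n : ℕ} {ι : Type*} {E I : Finset ι}
    {q : ι → EuclideanSpace ℝ (Fin n) → ℝ} {e x : EuclideanSpace ℝ (Fin n)}
    (hq : ∀ i y (c : ℝ), q i (y + c • e) = q i y) (hx : x ∈ Feas E I q) (c : ℝ) :
    x + c • e ∈ Feas E I q := by
  simpa only [Feas, Set.mem_ofPred_eq, hq] using hx

section QuarticDirection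

variable {n : ℕ} {φ : EuclideanSpace ℝ (Fin n) → ℝ} {Γ : Set (EuclideanSpace ℝ (Fin n))}
  {xbar e : EuclideanSpace ℝ (Fin n)} {a : ℝ}

/-- Along `e` the tilted problem is the scalar problem `min a s⁴ - t s`, whose minimizer is
`(t / 4a)^(1/3)`; the tilt `t = 4 a r³` is chosen so that this minimizer is `r`. -/
theorem inner_eq_of_mem_MArgmin_quartic (he : ‖e‖ = 1) (ha : 0 < a)
    (hΓ : ∀ x ∈ Γ, ∀ c : ℝ, x + c • e ∈ Γ)
    (hφ : ∀ x (c : ℝ), φ (x + c • e) = φ x + a * ((⟪e, x⟫ + c) ^ 4 - ⟪e, x⟫ ^ 4))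
    {γ r : ℝ} (hr : r ≠ 0) {x : EuclideanSpace ℝ (Fin n)}
    (hx : x ∈ MArgmin φ Γ xbar γ ((4 * a * r ^ 3) • e))
    (hball : x + (r - ⟪e, x⟫) • e ∈ closedBall xbar γ) :
    ⟪e, x⟫ = r := by
  obtain ⟨⟨hxΓ, -⟩, hmin⟩ := hx
  set s := ⟪e, x⟫
  have hee : ⟪e, e⟫ = 1 := by rw [real_inner_self_eq_norm_sq, he, one_pow]
  have hinner : ⟪e, x + (r - s) • e⟫ = r := by
    rw [inner_add_right, real_inner_smul_right, hee]; ring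
  have hcmp := hmin _ ⟨hΓ x hxΓ (r - s), hball⟩
  simp only [real_inner_smul_left, hinner, hφ] at hcmp
  exact quartic_tilt_eq_of_le ha hr (by linarith)

theorem not_tiltStable_of_quartic_direction (he : ‖e‖ = 1) (ha : 0 < a)
    (hΓ : ∀ x ∈ Γ, ∀ c : ℝ, x + c • e ∈ Γ)
    (hφ : ∀ x (c : ℝ), φ (x + c • e) = φ x + a * ((⟪e, x⟫ + c) ^ 4 - ⟪e, x⟫ ^ 4))
    (hxbar : ⟪e, xbar⟫ = 0) : ¬ TiltStable φ Γ xbar := by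
  rintro ⟨κ, hκ, γ, hγ, W, hW, m, hm0, hmin, hlip⟩
  have htilt : Tendsto (fun r : ℝ => (4 * a * r ^ 3) • e) (𝓝 0) (𝓝 0) :=
    ((continuous_const.mul (continuous_pow 3)).smul continuous_const).tendsto' _ _ (by simp)
  have hsmall : Tendsto (fun r : ℝ => 4 * a * κ * r ^ 2) (𝓝 0) (𝓝 0) :=
    (continuous_const.mul (continuous_pow 2)).tendsto' _ _ (by simp)
  obtain ⟨r, ⟨⟨hvW, hκr⟩, hrγ⟩, hr⟩ :=
    (((htilt.eventually hW).and (hsmall.eventually (gt_mem_nhds one_pos))).and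
      (eventually_lt_nhds (by positivity : (0 : ℝ) < γ / 3)) |>.filter_mono nhdsWithin_le_nhds
      |>.and self_mem_nhdsWithin).exists (f := 𝓝[>] (0 : ℝ))
  set t := 4 * a * r ^ 3
  set x := m (t • e)
  have hxmin : x ∈ MArgmin φ Γ xbar γ (t • e) := by rw [hmin _ hvW]; rfl
  have hκt : κ * t < r := by
    have : κ * t = (4 * a * κ * r ^ 2) * r := by ring
    rw [this]; exact mul_lt_of_lt_one_left hr hκr
  have hdist : ‖x - xbar‖ ≤ κ * t := by
    simpa [hm0, norm_smul, he, abs_of_pos (by positivity : 0 < t)] using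
      hlip _ hvW 0 (mem_of_mem_nhds hW)
  have hs : |⟪e, x⟫| ≤ κ * t := by
    calc |⟪e, x⟫| = |⟪e, x - xbar⟫| := by rw [inner_sub_right, hxbar, sub_zero]
      _ ≤ ‖e‖ * ‖x - xbar‖ := abs_real_inner_le_norm _ _
      _ ≤ κ * t := by rw [he, one_mul]; exact hdist
  have hball : x + (r - ⟪e, x⟫) • e ∈ closedBall xbar γ := by
    rw [mem_closedBall, dist_eq_norm, add_sub_right_comm]
    calc ‖x - xbar + (r - ⟪e, x⟫) • e‖ ≤ ‖x - xbar‖ + |r - ⟪e, x⟫| := by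
          simpa [norm_smul, he] using norm_add_le (x - xbar) ((r - ⟪e, x⟫) • e)
      _ ≤ γ := by linarith [abs_sub r ⟪e, x⟫, abs_of_pos hr]
  have hsr := inner_eq_of_mem_MArgmin_quartic he ha hΓ hφ hr.ne' hxmin hball
  linarith [le_abs_self ⟪e, x⟫]

end QuarticDirection

theorem HasFDerivAt.hasGradientAt_of_apply_eq_inner {F : Type*} [NormedAddCommGroup F]
    [InnerProductSpace ℝ F] [CompleteSpace F] {f : F → ℝ} {L : F →L[ℝ] ℝ} {g x : F}
    (hf : HasFDerivAt f L x) (hL : ∀ y, L y = ⟪g, y⟫) : HasGradientAt f g x := by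
  rwa [hasGradientAt_iff_hasFDerivAt, show InnerProductSpace.toDual ℝ F g = L from
    ContinuousLinearMap.ext fun y => by simp [hL]]

namespace Example42

local notation "proj" => EuclideanSpace.proj (𝕜 := ℝ) (ι := Fin 4)

theorem hasGradientAt_qEx_zero : HasGradientAt (qEx 0) !₂[1, 0, -1, 0] 0 :=
  ((proj 0).hasFDerivAt.sub (proj 2).hasFDerivAt).hasGradientAt_of_apply_eq_inner fun y => by
    simp [PiLp.inner_apply, Fin.sum_univ_four]; ring

theorem hasGradientAt_qEx_one : HasGradientAt (qEx 1) !₂[-1, 0, -1, 0] 0 :=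
  ((proj 0).hasFDerivAt.neg.sub (proj 2).hasFDerivAt).hasGradientAt_of_apply_eq_inner fun y => by
    simp [PiLp.inner_apply, Fin.sum_univ_four]; ring

theorem hasGradientAt_φEx2 : HasGradientAt φEx2 !₂[1 / 4, 0, 1, 0] 0 := by
  have hx₀ := (proj 0).hasFDerivAt (x := 0)
  have hx₁ := (proj 1).hasFDerivAt (x := 0)
  have hx₂ := (proj 2).hasFDerivAt (x := 0)
  have hx₃ := (proj 3).hasFDerivAt (x := 0)
  refine ((((hx₀.const_mul (1 / 4)).sub (hx₀.mul hx₁)).add hx₂).add (hx₂.pow 2) |>.add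
    ((hx₃.pow 4).const_mul (1 / 12))).hasGradientAt_of_apply_eq_inner fun y => ?_
  simp [PiLp.inner_apply, Fin.sum_univ_four]
  ring

local notation "e₃" => EuclideanSpace.single (3 : Fin 4) (1 : ℝ)

theorem qEx_add_smul_single_three (i : Fin 7) (x : EuclideanSpace ℝ (Fin 4)) (c : ℝ) :
    qEx i (x + c • e₃) = qEx i x := by
  fin_cases i <;> simp [qEx]

theorem φEx2_add_smul_single_three (x : EuclideanSpace ℝ (Fin 4)) (c : ℝ) :
    φEx2 (x + c • e₃) = φEx2 x + 1 / 12 * ((⟪e₃, x⟫ + c) ^ 4 - ⟪e₃, x⟫ ^ 4) := by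
  simp [φEx2, EuclideanSpace.inner_single_left]
  ring

theorem zero_mem_Feas : (0 : EuclideanSpace ℝ (Fin 4)) ∈
    Feas ({6} : Finset (Fin 7)) ({0, 1, 2, 3, 4, 5} : Finset (Fin 7)) qEx :=
  ⟨by simp [qEx], by simp [qEx]⟩

theorem multiplier_mem_Mult : !₂[3 / 8, 5 / 8, 0, 0, 0, 0, 0] ∈
    Mult ({0, 1, 2, 3, 4, 5} : Finset (Fin 7)) qEx 0 (-gradient φEx2 0) := by
  refine ⟨?_, fun i _ => by fin_cases i <;> norm_num [qEx]⟩
  simp only [Fin.sum_univ_seven, Matrix.cons_val, zero_smul, add_zero,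
    hasGradientAt_qEx_zero.gradient, hasGradientAt_qEx_one.gradient, hasGradientAt_φEx2.gradient]
  ext j
  fin_cases j <;> norm_num

end Example42

/-- **Example 4.2.** `x̄ = 0` is a stationary point of (NLP2) but not a tilt-stable local
minimizer. -/
theorem example42_not_tilt_stable :
    (0 : EuclideanSpace ℝ (Fin 4)) ∈
        Feas ({6} : Finset (Fin 7)) ({0, 1, 2, 3, 4, 5} : Finset (Fin 7)) qEx ∧
    (Mult ({0, 1, 2, 3, 4, 5} : Finset (Fin 7)) qEx 0 (-gradient φEx2 0)).Nonempty ∧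
    ¬ TiltStable φEx2
        (Feas ({6} : Finset (Fin 7)) ({0, 1, 2, 3, 4, 5} : Finset (Fin 7)) qEx) 0 :=
  ⟨Example42.zero_mem_Feas, ⟨_, Example42.multiplier_mem_Mult⟩,
    not_tiltStable_of_quartic_direction (by simp) (by norm_num)
      (fun _ hx => add_smul_mem_Feas Example42.qEx_add_smul_single_three hx)
      Example42.φEx2_add_smul_single_three (inner_zero_right _)⟩
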